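/- arXiv:2603.20924 — 2 statements merged into one kernel-verified Lean document; each statement's English description precedes it below -/
import Mathlib

section
/- The matrix A(n,q) is an M-matrix in the weak sense: it has nonpositive off-diagonal entries and all its principal minors are positive for q > 0. -/
/-- The `q`-integer `(m)_q = 1 + q + ⋯ + q^{m-1}`. -/
def qint (q : ℚ) (m : ℕ) : ℚ := ∑ i ∈ Finset.range m, q ^ i

/-- The `q`-deformed type `A` Cartan matrix: diagonal `q+1`,
superdiagonal `-1`, subdiagonal `-q`. -/
def Aq (n : ℕ) (q : ℚ) : Matrix (Fin n) (Fin n) ℚ := fun i j =>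
  if (i : ℕ) = j then q + 1
  else if (i : ℕ) + 1 = j then -1
  else if (j : ℕ) + 1 = i then -q
  else 0

/-!
Scaling the columns of `A(n,q)` by `q^j` makes it symmetric, with quadratic form
`x₀² + ∑_{k} q^(k+1) (x_k - x_{k+1})² + q^n x_{n-1}²`, which vanishes only at `x = 0`.
So `A(n,q) · diag(q^j)` is positive definite, hence so are its principal submatrices, and these
are the principal submatrices of `A(n,q)` times positive diagonal matrices.
-/

open Finset Matrix

theorem sum_range_succ_sum_range_succ {M : Type*} [AddCommMonoid M] (f : ℕ → ℕ → M) (N : ℕ) :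
    ∑ i ∈ range (N + 1), ∑ j ∈ range (N + 1), f i j =
      ∑ i ∈ range N, ∑ j ∈ range N, f i j + ∑ i ∈ range N, f i N +
        (∑ j ∈ range N, f N j + f N N) := by
  simp only [sum_range_succ, sum_add_distrib]
  abel

theorem det_submatrix_pos_of_posDef_mul_diagonal {n m : Type*} [Fintype n] [Fintype m]
    [DecidableEq n] [DecidableEq m] {A : Matrix n n ℝ} {d : n → ℝ} (hd : ∀ i, 0 < d i)
    (hA : (A * diagonal d).PosDef) {e : m → n} (he : Function.Injective e) :
    0 < (A.submatrix e e).det := by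
  have hpos := (hA.submatrix he).det_pos
  rw [show (A * diagonal d).submatrix e e = A.submatrix e e * diagonal (d ∘ e) by
    ext; simp [mul_diagonal], det_mul, det_diagonal] at hpos
  exact pos_of_mul_pos_left hpos (prod_pos fun i _ => hd (e i)).le

theorem weighted_sq_sum_pos {q : ℝ} (hq : 0 < q) {X : ℕ → ℝ} {N : ℕ} (hX : ∃ k ≤ N, X k ≠ 0) :
    0 < X 0 ^ 2 + ∑ k ∈ range N, q ^ (k + 1) * (X k - X (k + 1)) ^ 2 + q ^ (N + 1) * X N ^ 2 := by
  obtain ⟨k, hkN, hk⟩ := hX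
  by_contra! hle
  have hterm : ∀ k ∈ range N, 0 ≤ q ^ (k + 1) * (X k - X (k + 1)) ^ 2 := fun k _ => by positivity
  have hsum := sum_nonneg hterm
  have hlast : 0 ≤ q ^ (N + 1) * X N ^ 2 := by positivity
  have h0 : X 0 = 0 := by nlinarith [sq_nonneg (X 0)]
  have hstep : ∀ k ∈ range N, q ^ (k + 1) * (X k - X (k + 1)) ^ 2 = 0 :=
    (sum_eq_zero_iff_of_nonneg hterm).mp (by nlinarith [sq_nonneg (X 0)])
  have hall : ∀ k ≤ N, X k = 0 := by
    intro k hk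
    induction k with
    | zero => exact h0
    | succ k ih =>
      have := hstep k (mem_range.mpr hk)
      rw [mul_eq_zero, sq_eq_zero_iff, sub_eq_zero] at this
      rw [← this.resolve_left (pow_ne_zero _ hq.ne')]
      exact ih (by omega)
  exact hk (hall k hkN)

theorem Aq_apply_nonpos_of_ne {n : ℕ} {q : ℚ} (hq : 0 ≤ q) {i j : Fin n} (hij : i ≠ j) :
    Aq n q i j ≤ 0 := by
  simp only [Aq, Fin.val_ne_of_ne hij, if_false]
  split_ifs <;> linarith

noncomputable def symmAq (q : ℝ) (i j : ℕ) : ℝ :=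
  if i = j then (q + 1) * q ^ i
  else if i + 1 = j then -q ^ j
  else if j + 1 = i then -q ^ i
  else 0

theorem symmAq_comm (q : ℝ) (i j : ℕ) : symmAq q i j = symmAq q j i := by
  unfold symmAq
  split_ifs <;> first | rfl | omega | (subst_vars; rfl)

theorem sum_range_sum_range_symmAq (q : ℝ) (X : ℕ → ℝ) (N : ℕ) :
    ∑ i ∈ range (N + 1), ∑ j ∈ range (N + 1), X i * symmAq q i j * X j =
      X 0 ^ 2 + ∑ k ∈ range N, q ^ (k + 1) * (X k - X (k + 1)) ^ 2 + q ^ (N + 1) * X N ^ 2 := by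
  induction N with
  | zero => simp [symmAq]; ring
  | succ N ih =>
    have hrow : ∑ j ∈ range (N + 1), X (N + 1) * symmAq q (N + 1) j * X j =
        -q ^ (N + 1) * X (N + 1) * X N := by
      rw [sum_eq_single N]
      · simp only [symmAq, show N + 1 ≠ N by omega, show N + 1 + 1 ≠ N by omega, if_false,
          if_true]
        ring
      · intro j hj hjN
        simp only [mem_range] at hj
        simp [symmAq, show N + 1 ≠ j by omega, show N + 1 + 1 ≠ j by omega, hjN]
      · simp
    have hcol : ∑ i ∈ range (N + 1), X i * symmAq q i (N + 1) * X (N + 1) =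
        -q ^ (N + 1) * X (N + 1) * X N := by
      rw [← hrow]
      exact sum_congr rfl fun i _ => by rw [symmAq_comm]; ring
    rw [sum_range_succ_sum_range_succ, ih, hrow, hcol, sum_range_succ _ N]
    simp only [symmAq, if_true]
    ring

theorem posDef_symmAq {q : ℝ} (hq : 0 < q) (n : ℕ) :
    (Matrix.of fun i j : Fin n => symmAq q i j).PosDef := by
  refine PosDef.of_dotProduct_mulVec_pos (by ext i j; exact symmAq_comm q j i) fun x hx => ?_
  cases n with
  | zero => exact absurd (Subsingleton.elim x 0) hx
  | succ N =>
    set X : ℕ → ℝ := fun k => if h : k < N + 1 then x ⟨k, h⟩ else 0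
    have hxX : ∀ i, x i = X i := fun i => by simp only [X, dif_pos i.isLt]
    have hquad : star x ⬝ᵥ (Matrix.of (fun i j : Fin (N + 1) => symmAq q i j) *ᵥ x) =
        ∑ i ∈ range (N + 1), ∑ j ∈ range (N + 1), X i * symmAq q i j * X j := by
      simp only [star_trivial, dotProduct, mulVec, of_apply, hxX, mul_sum]
      rw [← Fin.sum_univ_eq_sum_range]
      refine sum_congr rfl fun i _ => ?_
      rw [← Fin.sum_univ_eq_sum_range (fun j => X i * symmAq q i j * X j)]
      exact sum_congr rfl fun j _ => by ring
    rw [hquad, sum_range_sum_range_symmAq]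
    obtain ⟨i, hi⟩ := Function.ne_iff.mp hx
    exact weighted_sq_sum_pos hq ⟨i, Nat.le_of_lt_succ i.isLt, by rwa [← hxX]⟩

theorem Aq_map_mul_diagonal (n : ℕ) (q : ℚ) :
    (Aq n q).map (Rat.cast : ℚ → ℝ) * diagonal (fun j : Fin n => (q : ℝ) ^ (j : ℕ)) =
      Matrix.of fun i j : Fin n => symmAq q i j := by
  ext ⟨i, hi⟩ ⟨j, hj⟩
  simp only [mul_diagonal, map_apply, of_apply, Aq, symmAq]
  split_ifs <;> push_cast <;> subst_vars <;> ring

theorem Aq_M_matrix_general (n : ℕ) (q : ℚ) (hq : 0 < q) :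
    (∀ i j : Fin n, i ≠ j → Aq n q i j ≤ 0) ∧
    (∀ J : Finset (Fin n), J.Nonempty →
      0 < ((Aq n q).submatrix (fun a : J => (a : Fin n)) (fun a : J => (a : Fin n))).det) := by
  refine ⟨fun i j hij => Aq_apply_nonpos_of_ne hq.le hij, fun J _ => ?_⟩
  have hqR : (0 : ℝ) < q := Rat.cast_pos.mpr hq
  have hdet := det_submatrix_pos_of_posDef_mul_diagonal (fun j => pow_pos hqR _)
    (Aq_map_mul_diagonal n q ▸ posDef_symmAq hqR n) (e := fun a : J => (a : Fin n))
    Subtype.val_injective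
  rwa [submatrix_map, ← Rat.cast_det, Rat.cast_pos] at hdet

theorem Aq_M_matrix (n : ℕ) (q : ℚ) (hn : 1 ≤ n) (hq : 0 < q) :
    (∀ i j : Fin n, i ≠ j → Aq n q i j ≤ 0) ∧
    (∀ J : Finset (Fin n), J.Nonempty →
      0 < ((Aq n q).submatrix (fun a : J => (a : Fin n)) (fun a : J => (a : Fin n))).det) :=
  Aq_M_matrix_general n q hq
end

section
/- For pairs of disjoint subsets (J,K) and (P,Q) of {1,...,n}, the intersection of the cones σ_{J,K} and σ_{P,Q} equals σ_{J∩P, K∩Q}, where σ_{J,K} = cone{e_i : i ∈ J} + cone{-α_k : k ∈ K}. -/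
/-- The cone `σ_{J,K} = cone{e_i : i ∈ J} + cone{-α_k : k ∈ K} ⊆ ℝⁿ`,
where `α_k` is the `k`-th column of `A(n,q)`. -/
def sigmaCone (n : ℕ) (q : ℚ) (J K : Finset (Fin n)) : Set (Fin n → ℝ) :=
  {v | ∃ c d : Fin n → ℝ, (∀ i, 0 ≤ c i) ∧ (∀ i, 0 ≤ d i) ∧
    v = (∑ i ∈ J, c i • (Pi.single i (1 : ℝ) : Fin n → ℝ)) +
        ∑ k ∈ K, d k • (-(fun i : Fin n => (Aq n q i k : ℝ)) : Fin n → ℝ)}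

/-!
Every point of `σ_{J,K}` is `C - A D` with `C, D ≥ 0` supported on the disjoint sets `J` and `K`,
so `C i * D i = 0` for all `i`. Such complementary representations are unique because `A` reverses
the sign of no nonzero vector: padding `x` with `x₀ = x_{n+1} = 0`,
`∑_{i=1}^n q^{1-i} x_i (A x)_i = q ∑_{i=0}^n q^{-i} (x_{i+1} - x_i)^2`,
which is positive for `x ≠ 0`. For two representations, `x = D - D'` has
`x_i (A x)_i = -(D_i C'_i + D'_i C_i) ≤ 0`, so they coincide; hence a point of
`σ_{J,K} ∩ σ_{P,Q}` has `C` supported on `J ∩ P` and `D` on `K ∩ Q`.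
-/

open Finset Function Matrix

theorem mul_eq_zero_of_disjoint_support {ι M₀ : Type*} [MulZeroClass M₀] {f g : ι → M₀}
    (h : Disjoint (support f) (support g)) : f * g = 0 := by
  funext i
  by_cases hf : f i = 0
  · simp [hf]
  · simp [notMem_support.1 (Set.disjoint_left.1 h hf)]

theorem Matrix.eq_of_sub_mulVec_eq {ι R : Type*} [Fintype ι] [CommRing R] [LinearOrder R]
    [IsStrictOrderedRing R] {M : Matrix ι ι R}
    (hM : ∀ x : ι → R, (∀ i, x i * (M *ᵥ x) i ≤ 0) → x = 0)
    {C D C' D' : ι → R} (hC : 0 ≤ C) (hD : 0 ≤ D) (hC' : 0 ≤ C') (hD' : 0 ≤ D')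
    (hCD : C * D = 0) (hCD' : C' * D' = 0) (h : C - M *ᵥ D = C' - M *ᵥ D') :
    C = C' ∧ D = D' := by
  have hMx : M *ᵥ (D - D') = C - C' := by
    rw [mulVec_sub]
    linear_combination -h
  have hD_eq : D - D' = 0 := hM _ fun i => by
    have h₁ : C i * D i = 0 := congr_fun hCD i
    have h₂ : C' i * D' i = 0 := congr_fun hCD' i
    rw [hMx, Pi.sub_apply, Pi.sub_apply]
    nlinarith [mul_nonneg (hD i) (hC' i), mul_nonneg (hD' i) (hC i)]
  obtain rfl := sub_eq_zero.1 hD_eq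
  exact ⟨sub_left_injective h, rfl⟩

section Cone

variable {ι R : Type*} [DecidableEq ι] [CommRing R]

theorem Finset.sum_smul_single_one_eq_indicator (s : Finset ι) (c : ι → R) :
    ∑ i ∈ s, c i • (Pi.single i (1 : R) : ι → R) = (s : Set ι).indicator c := by
  ext j
  simp [Finset.sum_apply, Pi.single_apply, Set.indicator_apply]

theorem Finset.sum_smul_neg_col_eq_neg_mulVec_indicator [Fintype ι] (M : Matrix ι ι R)
    (s : Finset ι) (d : ι → R) :
    ∑ k ∈ s, d k • (-fun i => M i k) = -(M *ᵥ (s : Set ι).indicator d) := by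
  ext j
  simp [Finset.sum_apply, mulVec, dotProduct, Set.indicator_apply, mul_comm]

end Cone

theorem mem_sigmaCone_iff {n : ℕ} {q : ℚ} {J K : Finset (Fin n)} {v : Fin n → ℝ} :
    v ∈ sigmaCone n q J K ↔ ∃ C D : Fin n → ℝ, 0 ≤ C ∧ 0 ≤ D ∧
      support C ⊆ J ∧ support D ⊆ K ∧ v = C - (Aq n q).map (↑) *ᵥ D := by
  have hcone : ∀ c d : Fin n → ℝ,
      (∑ i ∈ J, c i • (Pi.single i (1 : ℝ) : Fin n → ℝ)) +
        ∑ k ∈ K, d k • (-(fun i : Fin n => (Aq n q i k : ℝ)) : Fin n → ℝ) =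
      (J : Set (Fin n)).indicator c - (Aq n q).map (↑) *ᵥ (K : Set (Fin n)).indicator d := by
    intro c d
    rw [sum_smul_single_one_eq_indicator, sub_eq_add_neg,
      ← sum_smul_neg_col_eq_neg_mulVec_indicator]
    rfl
  constructor
  · rintro ⟨c, d, hc, hd, rfl⟩
    exact ⟨_, _, Set.indicator_nonneg fun i _ => hc i, Set.indicator_nonneg fun i _ => hd i,
      Set.support_indicator_subset, Set.support_indicator_subset, hcone c d⟩
  · rintro ⟨C, D, hC, hD, hCJ, hDK, rfl⟩
    refine ⟨C, D, hC, hD, ?_⟩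
    rw [hcone, Set.indicator_eq_self.2 hCJ, Set.indicator_eq_self.2 hDK]

theorem sigmaCone_mono {n : ℕ} {q : ℚ} {J K J' K' : Finset (Fin n)} (hJ : J ⊆ J')
    (hK : K ⊆ K') : sigmaCone n q J K ⊆ sigmaCone n q J' K' := by
  intro v hv
  obtain ⟨C, D, hC, hD, hCJ, hDK, rfl⟩ := mem_sigmaCone_iff.1 hv
  exact mem_sigmaCone_iff.2
    ⟨C, D, hC, hD, hCJ.trans (coe_subset.2 hJ), hDK.trans (coe_subset.2 hK), rfl⟩

def Fin.zeroPad {R : Type*} [Zero R] {n : ℕ} (x : Fin n → R) : ℕ → R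
  | 0 => 0
  | j + 1 => if h : j < n then x ⟨j, h⟩ else 0

namespace Fin

variable {R : Type*} {n : ℕ}

@[simp] theorem zeroPad_zero [Zero R] (x : Fin n → R) : zeroPad x 0 = 0 := rfl

@[simp] theorem zeroPad_succ [Zero R] (x : Fin n → R) (k : Fin n) :
    zeroPad x (k + 1) = x k := by
  simp [zeroPad]

theorem zeroPad_of_lt [Zero R] (x : Fin n → R) {j : ℕ} (hj : n < j) : zeroPad x j = 0 := by
  obtain ⟨j, rfl⟩ : ∃ m, j = m + 1 := ⟨j - 1, by omega⟩
  simp [zeroPad, show ¬ j < n by omega]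

theorem sum_ite_val_add_one_eq_zeroPad [AddCommMonoid R] (x : Fin n → R) (j : ℕ) :
    ∑ k : Fin n, (if k.1 + 1 = j then x k else 0) = zeroPad x j := by
  cases j with
  | zero => simp
  | succ j =>
    simp_rw [Nat.succ_inj, ← zeroPad_succ x]
    rw [Fin.sum_univ_eq_sum_range (fun k => if k = j then zeroPad x (k + 1) else 0),
      sum_ite_eq' (range n) j]
    split_ifs with hj
    · rfl
    · exact (zeroPad_of_lt x (by rw [mem_range] at hj; omega)).symm

end Fin

open Fin

theorem Aq_mulVec_apply (n : ℕ) (q : ℚ) (x : Fin n → ℝ) (i : Fin n) :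
    ((Aq n q).map (↑) *ᵥ x) i =
      (q + 1) * zeroPad x (i + 1) - q * zeroPad x i - zeroPad x (i + 2) := by
  have hrow : ∀ k, ((Aq n q i k : ℚ) : ℝ) * x k =
      (q + 1) * (if k.1 + 1 = i + 1 then x k else 0) - q * (if k.1 + 1 = i then x k else 0)
        - (if k.1 + 1 = i + 2 then x k else 0) := by
    intro k
    simp only [Aq]
    split_ifs <;> first | omega | (push_cast; ring1)
  simp only [mulVec, dotProduct, map_apply, hrow, sum_sub_distrib, ← mul_sum,
    sum_ite_val_add_one_eq_zeroPad]

/-- Summation by parts for the quadratic form of `diag(r ^ i) A`, which is symmetric when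
`r = q⁻¹`. -/
theorem weighted_sum_by_parts (q r : ℝ) (hqr : r * q = 1) (y : ℕ → ℝ) (m : ℕ) :
    ∑ i ∈ range m, r ^ i * (y (i + 1) * ((q + 1) * y (i + 1) - q * y i - y (i + 2)))
      + q * r ^ m * (y m * (y (m + 1) - y m))
      = q * (∑ i ∈ range m, r ^ i * (y (i + 1) - y i) ^ 2 + y 0 * (y 1 - y 0)) := by
  induction m with
  | zero => simp
  | succ m ih =>
    rw [sum_range_succ, sum_range_succ, pow_succ]
    linear_combination ih + r ^ m * y (m + 1) * (y (m + 2) - y (m + 1)) * hqr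

theorem eq_zero_of_weighted_sum_nonpos {q : ℝ} (hq : 0 < q) {y : ℕ → ℝ} {n : ℕ}
    (h0 : y 0 = 0) (hn : y (n + 1) = 0)
    (h : ∑ i ∈ range n,
      q⁻¹ ^ i * (y (i + 1) * ((q + 1) * y (i + 1) - q * y i - y (i + 2))) ≤ 0) :
    ∀ j ≤ n + 1, y j = 0 := by
  have hsq : q * ∑ i ∈ range (n + 1), q⁻¹ ^ i * (y (i + 1) - y i) ^ 2 ≤ 0 := by
    have := weighted_sum_by_parts q q⁻¹ (inv_mul_cancel₀ hq.ne') y n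
    rw [h0, hn] at this
    rw [sum_range_succ, hn]
    linear_combination h - this
  have hterms := (sum_eq_zero_iff_of_nonneg fun i _ => by positivity).1 <|
    le_antisymm (nonpos_of_mul_nonpos_right hsq hq) (sum_nonneg fun i _ => by positivity)
  have hstep : ∀ i ≤ n, y (i + 1) = y i := fun i hi => by
    simpa [hq.ne', sub_eq_zero] using hterms i (mem_range.2 (by omega))
  intro j hj
  induction j with
  | zero => exact h0
  | succ j ih => rw [hstep j (by omega), ih (by omega)]

theorem Aq_eq_zero_of_mul_mulVec_nonpos {n : ℕ} {q : ℚ} (hq : 0 < q) (x : Fin n → ℝ)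
    (h : ∀ i, x i * ((Aq n q).map (↑) *ᵥ x) i ≤ 0) : x = 0 := by
  have hpad : ∀ j ≤ n + 1, zeroPad x j = 0 := by
    refine eq_zero_of_weighted_sum_nonpos (q := q) (by exact_mod_cast hq) (zeroPad_zero x)
      (zeroPad_of_lt x n.lt_succ_self) ?_
    rw [← Fin.sum_univ_eq_sum_range (fun i => (q⁻¹ : ℝ) ^ i * (zeroPad x (i + 1) *
      ((q + 1) * zeroPad x (i + 1) - q * zeroPad x i - zeroPad x (i + 2))))]
    refine sum_nonpos fun i _ => ?_
    rw [← Aq_mulVec_apply, zeroPad_succ]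
    exact mul_nonpos_of_nonneg_of_nonpos (by positivity) (h i)
  funext k
  rw [← zeroPad_succ x k]
  exact hpad _ (by omega)

theorem sigmaCone_inter_general (n : ℕ) (q : ℚ) (hq : 0 < q)
    (J K P Q : Finset (Fin n)) (hJK : Disjoint J K) (hPQ : Disjoint P Q) :
    sigmaCone n q J K ∩ sigmaCone n q P Q = sigmaCone n q (J ∩ P) (K ∩ Q) := by
  refine subset_antisymm ?_ <| Set.subset_inter
    (sigmaCone_mono inter_subset_left inter_subset_left)
    (sigmaCone_mono inter_subset_right inter_subset_right)
  rintro v ⟨hv₁, hv₂⟩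
  obtain ⟨C, D, hC, hD, hCJ, hDK, rfl⟩ := mem_sigmaCone_iff.1 hv₁
  obtain ⟨C', D', hC', hD', hCP, hDQ, hv⟩ := mem_sigmaCone_iff.1 hv₂
  obtain ⟨rfl, rfl⟩ := eq_of_sub_mulVec_eq (Aq_eq_zero_of_mul_mulVec_nonpos hq)
    hC hD hC' hD' (mul_eq_zero_of_disjoint_support ((disjoint_coe.2 hJK).mono hCJ hDK))
    (mul_eq_zero_of_disjoint_support ((disjoint_coe.2 hPQ).mono hCP hDQ)) hv
  refine mem_sigmaCone_iff.2 ⟨C, D, hC, hD, ?_, ?_, rfl⟩ <;> rw [coe_inter]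
  exacts [Set.subset_inter hCJ hCP, Set.subset_inter hDK hDQ]

theorem sigmaCone_inter (n : ℕ) (q : ℚ) (hn : 1 ≤ n) (hq : 0 < q)
    (J K P Q : Finset (Fin n)) (hJK : Disjoint J K) (hPQ : Disjoint P Q) :
    sigmaCone n q J K ∩ sigmaCone n q P Q = sigmaCone n q (J ∩ P) (K ∩ Q) :=
  sigmaCone_inter_general n q hq J K P Q hJK hPQ
end
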